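/- arXiv:2507.09129 — 4 statements merged into one kernel-verified Lean document; each statement's English description precedes it below -/
import Mathlib

section
/- The normed space C_τ is not separable. -/
/-
For every `A ⊆ ℕ` put `ξ_A(s) = e^{-τ s} φ_A(s) v` with `v` a unit vector and `φ_A` a continuous
`[0,1]`-valued bump function equal to `1` at `-n` for `n ∈ A` and to `0` at `-n` for `n ∉ A`. Then
`e^{τ s}|ξ_A(s) - ξ_B(s)| = |φ_A(s) - φ_B(s)|` reaches `1` whenever `A ≠ B`, so the `ξ_A` are
pairwise at distance `≥ 1`. A countable dense set would then contain, for each `A`, a point at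
distance `< 1/2` from `ξ_A`, and these points would be distinct for distinct `A`: impossible,
since `Set ℕ` is uncountable.
-/

open Real Topology Filter MeasureTheory

noncomputable section

/-- Continuous-time paths indexed by `(-∞,0]`, with values in `ℝ^d`. -/
abbrev Path0 (d : ℕ) := Set.Iic (0:ℝ) → EuclideanSpace ℝ (Fin d)

/-- The weighted norm `‖ξ‖_τ = sup_{s ≤ 0} e^{τ s} |ξ(s)|`. -/
noncomputable def wnorm (d : ℕ) (τ : ℝ) (ξ : Path0 d) : ℝ :=
  ⨆ s : Set.Iic (0:ℝ), Real.exp (τ * s.1) * ‖ξ s‖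

/-- Membership in `C_τ`: continuity plus finiteness (boundedness) of the weighted sup. -/
def memC (d : ℕ) (τ : ℝ) (ξ : Path0 d) : Prop :=
  Continuous ξ ∧ BddAbove (Set.range fun s : Set.Iic (0:ℝ) => Real.exp (τ * s.1) * ‖ξ s‖)

namespace Ctau

section Weighted

variable {d : ℕ} (τ : ℝ)

def weighted (ξ : Path0 d) (s : Set.Iic (0:ℝ)) : ℝ := Real.exp (τ * s.1) * ‖ξ s‖

variable {τ}

lemma le_wnorm {ξ : Path0 d} (hξ : BddAbove (Set.range (weighted τ ξ))) (s : Set.Iic (0:ℝ)) :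
    weighted τ ξ s ≤ wnorm d τ ξ :=
  le_ciSup hξ s

lemma weighted_sub_le (ξ η : Path0 d) (s : Set.Iic (0:ℝ)) :
    weighted τ (ξ - η) s ≤ weighted τ ξ s + weighted τ η s := by
  rw [weighted, weighted, weighted, ← mul_add]
  exact mul_le_mul_of_nonneg_left (norm_sub_le _ _) (Real.exp_nonneg _)

lemma bddAbove_weighted_sub {ξ η : Path0 d} (hξ : BddAbove (Set.range (weighted τ ξ)))
    (hη : BddAbove (Set.range (weighted τ η))) : BddAbove (Set.range (weighted τ (ξ - η))) := by
  obtain ⟨M, hM⟩ := hξ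
  obtain ⟨N, hN⟩ := hη
  refine ⟨M + N, Set.forall_mem_range.2 fun s => ?_⟩
  exact (weighted_sub_le ξ η s).trans (add_le_add (hM ⟨s, rfl⟩) (hN ⟨s, rfl⟩))

lemma weighted_sub_le_wnorm_add {ξ ζ η : Path0 d} (hξ : BddAbove (Set.range (weighted τ ξ)))
    (hζ : BddAbove (Set.range (weighted τ ζ))) (hη : BddAbove (Set.range (weighted τ η)))
    (s : Set.Iic (0:ℝ)) :
    weighted τ (ξ - ζ) s ≤ wnorm d τ (ξ - η) + wnorm d τ (ζ - η) := by
  calc weighted τ (ξ - ζ) s = weighted τ ((ξ - η) - (ζ - η)) s := by rw [sub_sub_sub_cancel_right]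
    _ ≤ weighted τ (ξ - η) s + weighted τ (ζ - η) s := weighted_sub_le _ _ s
    _ ≤ wnorm d τ (ξ - η) + wnorm d τ (ζ - η) :=
      add_le_add (le_wnorm (bddAbove_weighted_sub hξ hη) s)
        (le_wnorm (bddAbove_weighted_sub hζ hη) s)

end Weighted

section Scaled

variable {d : ℕ} (τ : ℝ) (v : EuclideanSpace ℝ (Fin d))

def scaledPath (φ : ℝ → ℝ) : Path0 d := fun s => (Real.exp (-(τ * s.1)) * φ s.1) • v

variable {τ v}

lemma scaledPath_sub (φ ψ : ℝ → ℝ) :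
    scaledPath τ v φ - scaledPath τ v ψ = scaledPath τ v (φ - ψ) := by
  funext s
  simp only [scaledPath, Pi.sub_apply, ← sub_smul, mul_sub]

lemma weighted_scaledPath (hv : ‖v‖ = 1) (φ : ℝ → ℝ) (s : Set.Iic (0:ℝ)) :
    weighted τ (scaledPath τ v φ) s = |φ s.1| := by
  rw [weighted, scaledPath, norm_smul, hv, mul_one, Real.norm_eq_abs, abs_mul,
    abs_of_pos (Real.exp_pos _), ← mul_assoc, ← Real.exp_add, add_neg_cancel, Real.exp_zero,
    one_mul]

lemma memC_scaledPath (hv : ‖v‖ = 1) {φ : ℝ → ℝ} (hφ : Continuous φ) {C : ℝ}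
    (hC : ∀ x, |φ x| ≤ C) : memC d τ (scaledPath τ v φ) := by
  refine ⟨?_, C, Set.forall_mem_range.2 fun s => ?_⟩
  · unfold scaledPath
    fun_prop
  · exact (weighted_scaledPath hv φ s).le.trans (hC s.1)

end Scaled

section Bump

def bump (P : Set ℝ) (x : ℝ) : ℝ := max 0 (1 - 2 * Metric.infDist x P)

lemma continuous_bump (P : Set ℝ) : Continuous (bump P) := by
  unfold bump
  have := Metric.continuous_infDist_pt P
  fun_prop

lemma abs_bump_le_one (P : Set ℝ) (x : ℝ) : |bump P x| ≤ 1 := by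
  have := Metric.infDist_nonneg (x := x) (s := P)
  rw [bump, abs_of_nonneg (le_max_left _ _)]
  exact max_le zero_le_one (by linarith)

lemma bump_of_mem {P : Set ℝ} {x : ℝ} (hx : x ∈ P) : bump P x = 1 := by
  simp [bump, Metric.infDist_zero_of_mem hx]

lemma bump_eq_zero {P : Set ℝ} (hP : P.Nonempty) {x : ℝ} (hx : ∀ y ∈ P, 1 / 2 ≤ dist x y) :
    bump P x = 0 := by
  have := (Metric.le_infDist hP).2 hx
  exact max_eq_left (by linarith)

-- The point `1` only keeps the set nonempty, since `Metric.infDist x ∅ = 0`.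
def markers (A : Set ℕ) : Set ℝ := insert 1 ((fun n : ℕ => -(n:ℝ)) '' A)

lemma bump_markers_of_mem {A : Set ℕ} {n : ℕ} (hn : n ∈ A) : bump (markers A) (-n) = 1 :=
  bump_of_mem (Or.inr ⟨n, hn, rfl⟩)

lemma bump_markers_of_notMem {A : Set ℕ} {n : ℕ} (hn : n ∉ A) : bump (markers A) (-n) = 0 := by
  refine bump_eq_zero (Set.insert_nonempty _ _) ?_
  rintro _ (rfl | ⟨m, hm, rfl⟩)
  · rw [Real.dist_eq, abs_of_nonpos] <;> linarith [(n.cast_nonneg : (0:ℝ) ≤ n)]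
  · have hmn : (m:ℤ) ≠ n := by exact_mod_cast ne_of_mem_of_not_mem hm hn
    have : (1:ℝ) ≤ |(m:ℝ) - n| := by exact_mod_cast Int.one_le_abs (sub_ne_zero.2 hmn)
    rw [Real.dist_eq, neg_sub_neg]
    linarith

lemma abs_bump_markers_sub {A B : Set ℕ} {n : ℕ} (h : ¬(n ∈ A ↔ n ∈ B)) :
    |bump (markers A) (-n) - bump (markers B) (-n)| = 1 := by
  by_cases hA : n ∈ A
  · rw [bump_markers_of_mem hA, bump_markers_of_notMem fun hB => h (iff_of_true hA hB)]
    norm_num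
  · have hB : n ∈ B := not_not.1 fun hB => h (iff_of_false hA hB)
    rw [bump_markers_of_notMem hA, bump_markers_of_mem hB]
    norm_num

end Bump

end Ctau

open Ctau in
theorem Ctau_not_separable_general (d : ℕ) (hd : 0 < d) (τ : ℝ) :
    ¬ ∃ S : Set (Path0 d), S.Countable ∧ (∀ η ∈ S, memC d τ η) ∧
      ∀ ξ : Path0 d, memC d τ ξ → ∀ ε : ℝ, 0 < ε → ∃ η ∈ S, wnorm d τ (ξ - η) < ε := by
  rintro ⟨S, hS, hSC, hdense⟩
  obtain ⟨v, hv⟩ : ∃ v : EuclideanSpace ℝ (Fin d), ‖v‖ = 1 :=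
    ⟨EuclideanSpace.single ⟨0, hd⟩ 1, by simp⟩
  set ξ : Set ℕ → Path0 d := fun A => scaledPath τ v (bump (markers A))
  have hξ (A : Set ℕ) : memC d τ (ξ A) :=
    memC_scaledPath hv (continuous_bump _) (abs_bump_le_one _)
  choose F hFS hF using fun A => hdense (ξ A) (hξ A) (1 / 2) one_half_pos
  have hF_inj : Function.Injective F := by
    intro A B hAB
    by_contra hne
    obtain ⟨n, hn⟩ := not_forall.1 (mt Set.ext hne)
    have hfar : weighted τ (ξ A - ξ B) ⟨-n, by simp⟩ = 1 := by
      rw [scaledPath_sub, weighted_scaledPath hv]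
      exact abs_bump_markers_sub hn
    have hnear := weighted_sub_le_wnorm_add (hξ A).2 (hξ B).2 (hSC _ (hFS B)).2 ⟨-n, by simp⟩
    linarith [hAB ▸ hF A, hF B]
  have hcount : (Set.univ : Set (Set ℕ)).Countable :=
    Set.MapsTo.countable_of_injOn (fun A _ => hFS A) hF_inj.injOn hS
  obtain ⟨f, hf⟩ := (Set.countable_univ_iff.1 hcount).exists_injective_nat
  exact Function.cantor_injective f hf

/-- the normed space `(C_τ, ‖·‖_τ)` is not separable: there is no countable
subset of `C_τ` that is dense in `C_τ` for the norm `‖·‖_τ`. -/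
theorem Ctau_not_separable (d : ℕ) (hd : 0 < d) (τ : ℝ) (hτ : 0 < τ) :
    ¬ ∃ S : Set (Path0 d), S.Countable ∧ (∀ η ∈ S, memC d τ η) ∧
      ∀ ξ : Path0 d, memC d τ ξ → ∀ ε : ℝ, 0 < ε → ∃ η ∈ S, wnorm d τ (ξ - η) < ε :=
  Ctau_not_separable_general d hd τ
end
end

section
/- The space C_τ equipped with the norm ‖·‖_{τ+1} (restricted from C_{τ+1}) is separable. -/
open Real Topology Filter MeasureTheory

noncomputable section

/-- Projection of `(-∞,0]` onto `[-n,0]`. -/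
def projAux (n : ℕ) (s : Set.Iic (0:ℝ)) : Set.Icc (-(n:ℝ)) 0 :=
  ⟨max s.1 (-(n:ℝ)), le_max_right _ _, max_le s.2 (neg_nonpos.mpr (Nat.cast_nonneg n))⟩

lemma projAux_cont (n : ℕ) : Continuous (projAux n) :=
  Continuous.subtype_mk (continuous_subtype_val.max continuous_const) _

/-- Extend a continuous map on `[-n,0]` to `(-∞,0]` by freezing it at `-n`. -/
def extendF (d n : ℕ) (g : C(Set.Icc (-(n:ℝ)) 0, EuclideanSpace ℝ (Fin d))) : Path0 d :=
  fun s => g (projAux n s)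

/-- `C_τ` equipped with the norm `‖·‖_{τ+1}` is separable: there is a
countable subset of `C_τ` which is `‖·‖_{τ+1}`-dense in `C_τ`. -/
theorem Ctau_separable_weaker_norm (d : ℕ) (τ : ℝ) (hτ : 0 < τ) :
    ∃ S : Set (Path0 d), S.Countable ∧ (∀ η ∈ S, memC d τ η) ∧
      ∀ ξ : Path0 d, memC d τ ξ → ∀ ε : ℝ, 0 < ε →
        ∃ η ∈ S, wnorm d (τ + 1) (ξ - η) < ε := by
  classical
  have hD : ∀ n : ℕ, ∃ D : Set (C(Set.Icc (-(n:ℝ)) 0, EuclideanSpace ℝ (Fin d))),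
      D.Countable ∧ Dense D := fun n => TopologicalSpace.exists_countable_dense _
  choose D hDc hDd using hD
  refine ⟨⋃ n : ℕ, (extendF d n) '' (D n), Set.countable_iUnion fun n => (hDc n).image _, ?_, ?_⟩
  · rintro η hη
    simp only [Set.mem_iUnion, Set.mem_image] at hη
    obtain ⟨n, g, hg, rfl⟩ := hη
    refine ⟨g.continuous.comp (projAux_cont n), ⟨‖g‖, ?_⟩⟩
    rintro x ⟨s, rfl⟩
    calc Real.exp (τ * s.1) * ‖extendF d n g s‖ ≤ 1 * ‖g‖ := by
          refine mul_le_mul ?_ (g.norm_coe_le_norm _) (norm_nonneg _) zero_le_one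
          exact Real.exp_le_one_iff.mpr (mul_nonpos_of_nonneg_of_nonpos hτ.le s.2)
      _ = ‖g‖ := one_mul _
  · intro ξ hξ ε hε
    obtain ⟨M0, hM0⟩ := hξ.2
    set M := max M0 0 with hMdef
    have hM : ∀ s : Set.Iic (0:ℝ), Real.exp (τ * s.1) * ‖ξ s‖ ≤ M :=
      fun s => le_trans (hM0 ⟨s, rfl⟩) (le_max_left _ _)
    have hMnn : (0:ℝ) ≤ M := le_max_right _ _
    have hε2 : (0:ℝ) < ε / 2 := half_pos hε
    obtain ⟨n, hn⟩ := exists_nat_gt ((2 * M + ε / 2) / (ε / 2))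
    -- key tail estimate
    have hfin : Real.exp (-(n:ℝ)) * (2 * M + ε / 2) ≤ ε / 2 := by
      have hexp : (n : ℝ) + 1 ≤ Real.exp (n:ℝ) := Real.add_one_le_exp _
      have hpos : (0:ℝ) < Real.exp (n:ℝ) := Real.exp_pos _
      rw [div_lt_iff₀ hε2] at hn
      rw [Real.exp_neg, inv_mul_le_iff₀ hpos]
      nlinarith
    -- the restriction of ξ to [-n,0]
    set r : C(Set.Icc (-(n:ℝ)) 0, EuclideanSpace ℝ (Fin d)) :=
      ⟨fun t => ξ ⟨t.1, t.2.2⟩,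
        hξ.1.comp (Continuous.subtype_mk continuous_subtype_val _)⟩ with hr
    obtain ⟨g, hgD, hgr⟩ : ∃ g ∈ D n, dist r g < ε / 2 := by
      rcases Metric.dense_iff.mp (hDd n) r (ε/2) hε2 with ⟨g, hg1, hg2⟩
      exact ⟨g, hg2, Metric.mem_ball'.mp hg1⟩
    refine ⟨extendF d n g, Set.mem_iUnion.mpr ⟨n, Set.mem_image_of_mem _ hgD⟩, ?_⟩
    have key : ∀ s : Set.Iic (0:ℝ),
        Real.exp ((τ + 1) * s.1) * ‖(ξ - extendF d n g) s‖ ≤ ε / 2 := by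
      intro s
      have hsub : (ξ - extendF d n g) s = ξ s - g (projAux n s) := rfl
      rw [hsub]
      rcases le_total (-(n:ℝ)) s.1 with hsn | hsn
      · -- s ∈ [-n, 0] : use closeness of g to r
        have hpt : projAux n s = ⟨s.1, ⟨hsn, s.2⟩⟩ := Subtype.ext (max_eq_left hsn)
        have h1 : Real.exp ((τ + 1) * s.1) ≤ 1 :=
          Real.exp_le_one_iff.mpr (mul_nonpos_of_nonneg_of_nonpos (by linarith) s.2)
        have h2 : ‖ξ s - g (projAux n s)‖ ≤ dist r g := by
          rw [hpt]
          have h := ContinuousMap.dist_apply_le_dist (f := r) (g := g)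
            (⟨s.1, ⟨hsn, s.2⟩⟩ : Set.Icc (-(n:ℝ)) 0)
          rw [dist_eq_norm] at h
          exact h
        calc Real.exp ((τ + 1) * s.1) * ‖ξ s - g (projAux n s)‖
            ≤ 1 * (ε / 2) := mul_le_mul h1 (h2.trans hgr.le) (norm_nonneg _) zero_le_one
          _ = ε / 2 := one_mul _
      · -- s ≤ -n : tail estimate
        have hpt : projAux n s =
            ⟨-(n:ℝ), ⟨le_refl _, neg_nonpos.mpr (Nat.cast_nonneg n)⟩⟩ :=
          Subtype.ext (max_eq_right hsn)
        set p : Set.Icc (-(n:ℝ)) 0 := ⟨-(n:ℝ), ⟨le_refl _, neg_nonpos.mpr (Nat.cast_nonneg n)⟩⟩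
        rw [hpt]
        have hmul : Real.exp (τ * (-(n:ℝ))) * Real.exp (τ * (n:ℝ)) = 1 := by
          rw [← Real.exp_add, show τ * (-(n:ℝ)) + τ * (n:ℝ) = 0 by ring, Real.exp_zero]
        have e1 : Real.exp ((τ + 1) * s.1) * ‖ξ s‖ ≤ M * Real.exp s.1 := by
          have hMs := hM s
          have hq := (Real.exp_pos s.1).le
          rw [show (τ + 1) * s.1 = τ * s.1 + s.1 by ring, Real.exp_add]
          calc Real.exp (τ * s.1) * Real.exp s.1 * ‖ξ s‖
              = (Real.exp (τ * s.1) * ‖ξ s‖) * Real.exp s.1 := by ring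
            _ ≤ M * Real.exp s.1 := mul_le_mul_of_nonneg_right hMs hq
        have e2 : Real.exp s.1 ≤ Real.exp (-(n:ℝ)) := Real.exp_le_exp.mpr hsn
        have e3 : Real.exp ((τ + 1) * s.1) ≤ Real.exp (-(n:ℝ)) * Real.exp (τ * (-(n:ℝ))) := by
          rw [← Real.exp_add]
          apply Real.exp_le_exp.mpr
          nlinarith [mul_nonpos_of_nonneg_of_nonpos hτ.le s.2, hsn, s.2]
        have hrp : ‖r p‖ ≤ M * Real.exp (τ * (n:ℝ)) := by
          have hq := hM ⟨-(n:ℝ), Set.mem_Iic.mpr (neg_nonpos.mpr (Nat.cast_nonneg n))⟩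
          have hrpe : r p = ξ ⟨-(n:ℝ), Set.mem_Iic.mpr (neg_nonpos.mpr (Nat.cast_nonneg n))⟩ := rfl
          rw [hrpe]
          nlinarith [Real.exp_pos (τ * (n:ℝ)), Real.exp_pos (τ * (-(n:ℝ))),
            norm_nonneg (ξ (⟨-(n:ℝ), Set.mem_Iic.mpr (neg_nonpos.mpr (Nat.cast_nonneg n))⟩ : Set.Iic (0:ℝ)))]
        have gbound : ‖g p‖ ≤ M * Real.exp (τ * (n:ℝ)) + ε / 2 := by
          have h1 : ‖g p‖ ≤ ‖r p‖ + dist (r p) (g p) := by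
            rw [dist_eq_norm]
            calc ‖g p‖ = ‖r p - (r p - g p)‖ := (congrArg norm (sub_sub_cancel _ _)).symm
              _ ≤ ‖r p‖ + ‖r p - g p‖ := norm_sub_le _ _
          have h2 : dist (r p) (g p) ≤ dist r g := ContinuousMap.dist_apply_le_dist p
          linarith [hrp, h2.trans hgr.le]
        have hB : Real.exp (τ * (-(n:ℝ))) ≤ 1 :=
          Real.exp_le_one_iff.mpr (mul_nonpos_of_nonneg_of_nonpos hτ.le
            (neg_nonpos.mpr (Nat.cast_nonneg n)))
        calc Real.exp ((τ + 1) * s.1) * ‖ξ s - g p‖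
            ≤ Real.exp ((τ + 1) * s.1) * (‖ξ s‖ + ‖g p‖) :=
              mul_le_mul_of_nonneg_left (norm_sub_le _ _) (Real.exp_pos _).le
          _ = Real.exp ((τ + 1) * s.1) * ‖ξ s‖ + Real.exp ((τ + 1) * s.1) * ‖g p‖ :=
              mul_add _ _ _
          _ ≤ M * Real.exp (-(n:ℝ)) +
              (Real.exp (-(n:ℝ)) * Real.exp (τ * (-(n:ℝ)))) *
                (M * Real.exp (τ * (n:ℝ)) + ε / 2) := by
              refine add_le_add (e1.trans (mul_le_mul_of_nonneg_left e2 hMnn)) ?_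
              exact mul_le_mul e3 gbound (norm_nonneg _) (by positivity)
          _ ≤ ε / 2 := by
              have k0 : Real.exp (-(n:ℝ)) * Real.exp (τ * (-(n:ℝ))) *
                    (M * Real.exp (τ * (n:ℝ)) + ε / 2)
                  = Real.exp (-(n:ℝ)) * M *
                      (Real.exp (τ * (-(n:ℝ))) * Real.exp (τ * (n:ℝ)))
                    + (Real.exp (-(n:ℝ)) * (ε / 2)) * Real.exp (τ * (-(n:ℝ))) := by ring
              rw [k0, hmul, mul_one]
              have k1 : (Real.exp (-(n:ℝ)) * (ε / 2)) * Real.exp (τ * (-(n:ℝ)))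
                  ≤ (Real.exp (-(n:ℝ)) * (ε / 2)) * 1 :=
                mul_le_mul_of_nonneg_left hB (by positivity)
              nlinarith [hfin]
    have : wnorm d (τ + 1) (ξ - extendF d n g) ≤ ε / 2 := Real.iSup_le key hε2.le
    linarith

end
end

section
/- Suppose P_t is a Markov semigroup on bounded measurable functions over C_τ satisfying the asymptotic log-Harnack inequality P_t log f(η) ≤ log P_t f(ξ) + Λ(η)‖ξ−η‖_τ² + Γ_t(η)‖∇ log f‖_∞‖ξ−η‖_τ for all bounded f with finite Lipschitz log-gradient, where Γ_t(η) = c e^{−τ₀ t} e^{δ‖η‖_τ^{2α}} → 0 as t → ∞. Then applying this to f = 1 + ε g and letting ε→0 yields the asymptotic gradient estimate |∇P_t g|(ξ) ≤ √(2Λ(ξ)) √(P_t g² − (P_t g)²)(ξ) + ‖∇g‖_∞ Γ_t(ξ) for bounded Lipschitz g. -/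
/-!
Put `μ = P_t(ξ, ·)`, `ν = P_t(η, ·)`, `d = ‖ξ - η‖` and `a = P_t g(ξ)`. Feeding
`f = exp (∓ s d (g - a))` into the log-Harnack inequality and bounding `log ∫ e^u dν` by the
second-order expansion `∫ u dν + (e^{‖u‖_∞} / 2) ∫ u² dν` gives
`|P_t g(ξ) - P_t g(η)| / d ≤ (s / 2) e^{O(d)} ∫ (g - a)² dν + Λ / s + Γ ‖∇g‖_∞`.
Feeding `f = exp (-d (g - a)²)` into the same inequality shows that `∫ (g - a)² dν` exceeds the
variance of `g` under `μ` by at most `O(d)`. Letting `η → ξ` and minimizing over `s`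
(`min_s (s V / 2 + Λ / s) = √(2Λ) √V`) gives the estimate.
-/

open Real Topology Filter MeasureTheory ProbabilityTheory

namespace Real

lemma exp_le_quadratic_of_nonpos {x : ℝ} (hx : x ≤ 0) : exp x ≤ 1 + x + x ^ 2 / 2 := by
  have hderiv (y : ℝ) : HasDerivAt (fun y => 1 + y + y ^ 2 / 2 - exp y) (1 + y - exp y) y := by
    have hsq : HasDerivAt (fun y : ℝ => y ^ 2 / 2) y y := by
      simpa using (hasDerivAt_pow 2 y).div_const 2
    exact (((hasDerivAt_id y).const_add 1).add hsq).sub (hasDerivAt_exp y)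
  have hanti : Antitone (fun y => 1 + y + y ^ 2 / 2 - exp y) :=
    antitone_of_deriv_nonpos (fun y => (hderiv y).differentiableAt) fun y => by
      rw [(hderiv y).deriv]; linarith [add_one_le_exp y]
  simpa using hanti hx

lemma exp_le_one_add_add_sq_mul_exp_of_nonneg {x : ℝ} (hx : 0 ≤ x) :
    exp x ≤ 1 + x + x ^ 2 / 2 * exp x := by
  have hderiv (y : ℝ) : HasDerivAt (fun y => 1 + y + y ^ 2 / 2 * exp y - exp y)
      (1 + (y * exp y + y ^ 2 / 2 * exp y) - exp y) y := by
    have hsq : HasDerivAt (fun y : ℝ => y ^ 2 / 2) y y := by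
      simpa using (hasDerivAt_pow 2 y).div_const 2
    exact (((hasDerivAt_id y).const_add 1).add (hsq.mul (hasDerivAt_exp y))).sub
      (hasDerivAt_exp y)
  have hmono : Monotone (fun y => 1 + y + y ^ 2 / 2 * exp y - exp y) :=
    monotone_of_deriv_nonneg (fun y => (hderiv y).differentiableAt) fun y => by
      have : (1 - y) * exp y ≤ 1 := by
        simpa [← exp_add] using
          mul_le_mul_of_nonneg_right (by linarith [add_one_le_exp (-y)] : 1 - y ≤ exp (-y))
            (exp_pos y).le
      rw [(hderiv y).deriv]
      nlinarith [exp_pos y, mul_nonneg (sq_nonneg y) (exp_pos y).le]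
  simpa using hmono hx

lemma exp_le_one_add_add_sq_mul_exp_of_abs_le {x M : ℝ} (h : |x| ≤ M) :
    exp x ≤ 1 + x + x ^ 2 / 2 * exp M := by
  rcases le_total x 0 with hx | hx
  · have : 1 ≤ exp M := one_le_exp ((abs_nonneg x).trans h)
    nlinarith [exp_le_quadratic_of_nonpos hx, sq_nonneg x]
  · have : exp x ≤ exp M := exp_le_exp.2 ((le_abs_self x).trans h)
    nlinarith [exp_le_one_add_add_sq_mul_exp_of_nonneg hx, sq_nonneg x]

end Real

section CumulantBound

variable {α : Type*} [MeasurableSpace α] {ν : Measure α} [IsProbabilityMeasure ν] {u : α → ℝ}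
  {M : ℝ}

lemma integrable_exp_of_abs_le (hu : Measurable u) (hM : ∀ x, |u x| ≤ M) :
    Integrable (fun x => exp (u x)) ν :=
  .of_bound hu.exp.aestronglyMeasurable (exp M) <| ae_of_all _ fun x => by
    simpa [abs_of_pos (exp_pos _)] using (le_abs_self _).trans (hM x)

lemma integral_exp_le_of_abs_le (hu : Measurable u) (hM : ∀ x, |u x| ≤ M) :
    ∫ x, exp (u x) ∂ν ≤ 1 + ∫ x, u x ∂ν + exp M / 2 * ∫ x, u x ^ 2 ∂ν := by
  have hint : Integrable u ν := .of_bound hu.aestronglyMeasurable M (ae_of_all _ hM)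
  have hint_sq : Integrable (fun x => u x ^ 2) ν :=
    .of_bound (hu.pow_const 2).aestronglyMeasurable (M ^ 2) <| ae_of_all _ fun x => by
      simpa using sq_le_sq' (abs_le.1 (hM x)).1 (abs_le.1 (hM x)).2
  calc ∫ x, exp (u x) ∂ν ≤ ∫ x, (1 + u x + exp M / 2 * u x ^ 2) ∂ν :=
        integral_mono (integrable_exp_of_abs_le hu hM)
          (((integrable_const 1).add hint).add (hint_sq.const_mul _))
          fun x => (exp_le_one_add_add_sq_mul_exp_of_abs_le (hM x)).trans_eq (by ring)
    _ = 1 + ∫ x, u x ∂ν + exp M / 2 * ∫ x, u x ^ 2 ∂ν := by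
        rw [integral_add (f := fun x => 1 + u x) ((integrable_const 1).add hint)
          (hint_sq.const_mul _), integral_add (integrable_const 1) hint, integral_const_mul]
        simp

lemma log_integral_exp_le_of_abs_le (hu : Measurable u) (hM : ∀ x, |u x| ≤ M) :
    log (∫ x, exp (u x) ∂ν) ≤ ∫ x, u x ∂ν + exp M / 2 * ∫ x, u x ^ 2 ∂ν := by
  have := log_le_sub_one_of_pos (integral_exp_pos (μ := ν) (integrable_exp_of_abs_le hu hM))
  linarith [integral_exp_le_of_abs_le (ν := ν) hu hM]

end CumulantBound

/-- The log-Harnack inequality `P_t log f(ξ) ≤ log P_t f(η) + Λ d² + Γ ‖∇ log f‖_∞ d` for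
`μ = P_t(ξ, ·)`, `ν = P_t(η, ·)` and `d = ‖ξ - η‖`, written for `u = log f`. -/
def LogHarnack {E : Type*} [MetricSpace E] [MeasurableSpace E] (μ ν : Measure E) (Λ Γ d : ℝ) :
    Prop :=
  ∀ u : E → ℝ, Measurable u → (∃ C, ∀ x, |u x| ≤ C) → ∀ L : ℝ,
    (∀ x y, |u x - u y| ≤ L * dist x y) →
    ∫ x, u x ∂μ ≤ log (∫ x, exp (u x) ∂ν) + Λ * d ^ 2 + Γ * L * d

namespace LogHarnack

variable {E : Type*} [MetricSpace E] [MeasurableSpace E] {μ ν : Measure E}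
  [IsProbabilityMeasure ν] {Λ Γ d s M L : ℝ} {w : E → ℝ}

theorem integral_le (h : LogHarnack μ ν Λ Γ d) {u : E → ℝ} (hu : Measurable u)
    (hM : ∀ x, |u x| ≤ M) (hL : ∀ x y, |u x - u y| ≤ L * dist x y) :
    ∫ x, u x ∂μ ≤ ∫ x, u x ∂ν + exp M / 2 * ∫ x, u x ^ 2 ∂ν + Λ * d ^ 2 + Γ * L * d := by
  linarith [h u hu ⟨M, hM⟩ L hL, log_integral_exp_le_of_abs_le (ν := ν) hu hM]

theorem integral_sq_le (h : LogHarnack μ ν Λ Γ d) (hd : 0 < d) (hw : Measurable w)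
    (hM : ∀ x, |w x| ≤ M) (hL : ∀ x y, |w x - w y| ≤ L * dist x y) :
    ∫ x, w x ^ 2 ∂ν ≤
      ∫ x, w x ^ 2 ∂μ + d * (exp (d * M ^ 2) / 2 * M ^ 4 + Λ + 2 * M * L * Γ) := by
  have hsq (x : E) : w x ^ 2 ≤ M ^ 2 := sq_le_sq' (abs_le.1 (hM x)).1 (abs_le.1 (hM x)).2
  have hu_bound (x : E) : |-(d * w x ^ 2)| ≤ d * M ^ 2 := by
    rw [abs_neg, abs_of_nonneg (by positivity)]
    exact mul_le_mul_of_nonneg_left (hsq x) hd.le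
  have hu_lip (x y : E) : |-(d * w x ^ 2) - -(d * w y ^ 2)| ≤ d * (2 * M * L) * dist x y := by
    have hsum : |w x + w y| ≤ 2 * M := (abs_add_le _ _).trans (by linarith [hM x, hM y])
    calc |-(d * w x ^ 2) - -(d * w y ^ 2)| = |d * ((w y - w x) * (w y + w x))| := by
          congr 1; ring
      _ = d * (|w x - w y| * |w x + w y|) := by
          rw [abs_mul, abs_mul, abs_of_pos hd, abs_sub_comm, add_comm]
      _ ≤ d * (L * dist x y * (2 * M)) := by
          gcongr
          exacts [(abs_nonneg _).trans (hL x y), hL x y]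
      _ = d * (2 * M * L) * dist x y := by ring
  have hmain := h.integral_le (u := fun x => -(d * w x ^ 2)) ((hw.pow_const 2).const_mul d).neg
    hu_bound hu_lip
  have hsq_int : ∫ x, (-(d * w x ^ 2)) ^ 2 ∂ν ≤ (d * M ^ 2) ^ 2 := by
    simpa using integral_mono_of_nonneg (μ := ν) (ae_of_all _ fun x => sq_nonneg _)
      (integrable_const ((d * M ^ 2) ^ 2)) (ae_of_all _ fun x =>
        sq_le_sq' (abs_le.1 (hu_bound x)).1 (abs_le.1 (hu_bound x)).2)
  simp only [integral_neg, integral_const_mul] at hmain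
  refine le_of_mul_le_mul_left ?_ hd
  nlinarith [mul_le_mul_of_nonneg_left hsq_int (by positivity : 0 ≤ exp (d * M ^ 2) / 2)]

theorem integral_sub_integral_le (h : LogHarnack μ ν Λ Γ d) (hd : 0 < d) (hs : 0 < s)
    (hw : Measurable w) (hM : ∀ x, |w x| ≤ M) (hL : ∀ x y, |w x - w y| ≤ L * dist x y) :
    ∫ x, w x ∂ν - ∫ x, w x ∂μ ≤
      d * (s / 2 * exp (s * d * M) * ∫ x, w x ^ 2 ∂ν + Λ / s + Γ * L) := by
  have hε : 0 < s * d := mul_pos hs hd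
  have hu_bound (x : E) : |-(s * d * w x)| ≤ s * d * M := by
    rw [abs_neg, abs_mul, abs_of_pos hε]; exact mul_le_mul_of_nonneg_left (hM x) hε.le
  have hu_lip (x y : E) : |-(s * d * w x) - -(s * d * w y)| ≤ s * d * L * dist x y := by
    rw [show -(s * d * w x) - -(s * d * w y) = s * d * (w y - w x) by ring, abs_mul,
      abs_of_pos hε, abs_sub_comm]
    exact (mul_le_mul_of_nonneg_left (hL x y) hε.le).trans_eq (by ring)
  have hmain := h.integral_le (u := fun x => -(s * d * w x)) (hw.const_mul _).neg hu_bound hu_lip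
  simp only [integral_neg, integral_const_mul, neg_sq, mul_pow] at hmain
  refine le_of_mul_le_mul_left ?_ hε
  have : s * d * (d * (s / 2 * exp (s * d * M) * ∫ x, w x ^ 2 ∂ν + Λ / s + Γ * L)) =
      exp (s * d * M) / 2 * ((s * d) ^ 2 * ∫ x, w x ^ 2 ∂ν) + Λ * d ^ 2 + Γ * (s * d * L) * d := by
    field_simp
  linarith

theorem abs_integral_sub_integral_le [IsProbabilityMeasure μ] (h : LogHarnack μ ν Λ Γ d)
    (hd : 0 < d) (hs : 0 < s) {g : E → ℝ} (hg : Measurable g) (a : ℝ) (hM : ∀ x, |g x - a| ≤ M)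
    (hL : ∀ x y, |g x - g y| ≤ L * dist x y) :
    |∫ x, g x ∂μ - ∫ x, g x ∂ν| ≤
      d * (s / 2 * exp (s * d * M) * ∫ x, (g x - a) ^ 2 ∂ν + Λ / s + Γ * L) := by
  have hg_int {ρ : Measure E} [IsProbabilityMeasure ρ] : Integrable g ρ :=
    .of_bound hg.aestronglyMeasurable (|a| + M) <| ae_of_all _ fun x => by
      linarith [abs_sub_abs_le_abs_sub (g x) a, hM x, norm_eq_abs (g x)]
  have hup := h.integral_sub_integral_le hd hs (hg.sub_const a) hM (by simpa using hL)
  have hdown := h.integral_sub_integral_le hd hs (hg.const_sub a)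
    (fun x => by rw [abs_sub_comm]; exact hM x)
    (fun x y => by rw [sub_sub_sub_cancel_left, abs_sub_comm]; exact hL x y)
  simp only [integral_sub hg_int (integrable_const a), integral_sub (integrable_const a) hg_int,
    integral_const, probReal_univ, one_smul, sub_sq_comm a] at hup hdown
  rw [abs_le]; constructor <;> linarith

theorem abs_integral_sub_integral_div_le [IsProbabilityMeasure μ] (h : LogHarnack μ ν Λ Γ d)
    (hd : 0 < d) (hs : 0 < s) {g : E → ℝ} (hg : Measurable g)
    (hM : ∀ x, |g x - ∫ z, g z ∂μ| ≤ M) (hL : ∀ x y, |g x - g y| ≤ L * dist x y) :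
    |∫ x, g x ∂μ - ∫ x, g x ∂ν| / d ≤ s / 2 * exp (s * d * M) *
      (Var[g; μ] + d * (exp (d * M ^ 2) / 2 * M ^ 4 + Λ + 2 * M * L * Γ)) + Λ / s + Γ * L := by
  rw [div_le_iff₀' hd, variance_eq_integral hg.aemeasurable]
  refine (h.abs_integral_sub_integral_le hd hs hg _ hM hL).trans ?_
  gcongr
  exact h.integral_sq_le hd (hg.sub_const _) hM (by simpa using hL)

end LogHarnack

/-- In `ℝ` the limsup along `⊥` is the junk value `sInf univ = 0`, whence `0 ≤ c`. -/
lemma limsup_le_of_eventually_le_of_tendsto {α : Type*} {l : Filter α} {q B : α → ℝ} {c : ℝ}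
    (hq : ∀ x, 0 ≤ q x) (hc : 0 ≤ c) (hqB : ∀ᶠ x in l, q x ≤ B x) (hB : Tendsto B l (𝓝 c)) :
    limsup q l ≤ c := by
  rcases l.eq_or_neBot with rfl | hl
  · simpa [limsup, limsSup] using hc
  · exact (limsup_le_limsup hqB (isCoboundedUnder_le_of_le l hq) hB.isBoundedUnder_le).trans_eq
      hB.limsup_eq

lemma le_sqrt_mul_sqrt_of_forall_le {x Λ V : ℝ} (hΛ : 0 < Λ) (hV : 0 ≤ V)
    (h : ∀ s > 0, x ≤ s / 2 * V + Λ / s) : x ≤ √(2 * Λ) * √V := by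
  rcases hV.eq_or_lt with rfl | hV
  · rw [sqrt_zero, mul_zero]
    refine le_of_forall_pos_le_add fun ε hε => ?_
    simpa [div_div_cancel₀ hΛ.ne'] using h (Λ / ε) (div_pos hΛ hε)
  · -- the minimum of `s ↦ s V / 2 + Λ / s` is attained at `s = √(2Λ) / √V`
    have hA : 0 < √(2 * Λ) := sqrt_pos.2 (by positivity)
    have hB : 0 < √V := sqrt_pos.2 hV
    refine (h (√(2 * Λ) / √V) (div_pos hA hB)).trans_eq ?_
    have hΛA : Λ = √(2 * Λ) ^ 2 / 2 := by rw [sq_sqrt (by positivity)]; ring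
    have hVB : V = √V ^ 2 := (sq_sqrt hV.le).symm
    generalize √(2 * Λ) = A at *
    generalize √V = B at *
    subst hΛA hVB
    field_simp
    ring

theorem asymptotic_gradient_estimate_general {E : Type*} [MetricSpace E] [MeasurableSpace E]
    (κ : ℝ → E → Measure E) (hκ : ∀ t x, IsProbabilityMeasure (κ t x))
    (nrm : E → ℝ) (c δ τ0 α : ℝ) (hc : 0 < c)
    (H : ∀ t : ℝ, 0 ≤ t → ∀ f : E → ℝ, Measurable f → (∀ x, 0 < f x) →
      (∃ C, ∀ x, f x ≤ C) → ∀ L : ℝ,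
      (∀ x y, |Real.log (f x) - Real.log (f y)| ≤ L * dist x y) →
      ∀ ξ η : E,
        (∫ z, Real.log (f z) ∂(κ t η)) ≤ Real.log (∫ z, f z ∂(κ t ξ))
          + (c * Real.exp (δ * nrm η ^ (2 * α))) * dist ξ η ^ 2
          + (c * Real.exp (-τ0 * t) * Real.exp (δ * nrm η ^ (2 * α))) * L * dist ξ η) :
    ∀ t : ℝ, 0 ≤ t → ∀ g : E → ℝ, Measurable g → (∃ C, ∀ x, |g x| ≤ C) →
      ∀ L : ℝ, 0 ≤ L → (∀ x y, |g x - g y| ≤ L * dist x y) → ∀ ξ : E,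
      Filter.limsup
          (fun η => |(∫ z, g z ∂(κ t ξ)) - ∫ z, g z ∂(κ t η)| / dist ξ η) (𝓝[≠] ξ)
        ≤ Real.sqrt (2 * (c * Real.exp (δ * nrm ξ ^ (2 * α))))
            * Real.sqrt ((∫ z, (g z) ^ 2 ∂(κ t ξ)) - (∫ z, g z ∂(κ t ξ)) ^ 2)
          + L * (c * Real.exp (-τ0 * t) * Real.exp (δ * nrm ξ ^ (2 * α))) := by
  intro t ht g hg ⟨C, hC⟩ L hL hLip ξ
  set Λ := c * exp (δ * nrm ξ ^ (2 * α))
  set Γ := c * exp (-τ0 * t) * exp (δ * nrm ξ ^ (2 * α))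
  have hharnack (η : E) : LogHarnack (κ t ξ) (κ t η) Λ Γ (dist ξ η) :=
    fun u hu ⟨M, hM⟩ L' hL' => by
      simpa only [log_exp, dist_comm η ξ] using H t ht (fun x => exp (u x)) hu.exp
        (fun x => exp_pos _) ⟨exp M, fun x => exp_le_exp.2 ((le_abs_self _).trans (hM x))⟩ L'
        (by simpa only [log_exp] using hL') η ξ
  have hmean : |∫ z, g z ∂κ t ξ| ≤ C := by
    simpa using norm_integral_le_of_norm_le_const (μ := κ t ξ)
      (ae_of_all _ fun x => (norm_eq_abs (g x)).trans_le (hC x))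
  have hcentered (x : E) : |g x - ∫ z, g z ∂κ t ξ| ≤ 2 * C :=
    (abs_sub _ _).trans (by linarith [hC x])
  have hquot (s : ℝ) (hs : 0 < s) :
      limsup (fun η => |(∫ z, g z ∂(κ t ξ)) - ∫ z, g z ∂(κ t η)| / dist ξ η) (𝓝[≠] ξ)
        ≤ s / 2 * Var[g; κ t ξ] + Λ / s + Γ * L := by
    have hcont : Continuous fun d => s / 2 * exp (s * d * (2 * C)) *
        (Var[g; κ t ξ] + d * (exp (d * (2 * C) ^ 2) / 2 * (2 * C) ^ 4 + Λ + 2 * (2 * C) * L * Γ))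
        + Λ / s + Γ * L := by
      fun_prop
    refine limsup_le_of_eventually_le_of_tendsto (fun η => by positivity)
      (by have := variance_nonneg g (κ t ξ); positivity)
      (eventually_nhdsWithin_of_forall fun η hη => (hharnack η).abs_integral_sub_integral_div_le
        (dist_pos.2 (Ne.symm hη)) hs hg hcentered hLip) ?_
    exact (hcont.tendsto' 0 _ (by simp)).comp <|
      ((continuous_const.dist continuous_id).tendsto' ξ 0 (dist_self ξ)).mono_left
        nhdsWithin_le_nhds
  have hvar : Var[g; κ t ξ] = ∫ z, g z ^ 2 ∂κ t ξ - (∫ z, g z ∂κ t ξ) ^ 2 := by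
    simpa using variance_eq_sub (MemLp.of_bound hg.aestronglyMeasurable C
      (ae_of_all _ fun x => (norm_eq_abs (g x)).trans_le (hC x)))
  rw [← hvar, add_comm, ← sub_le_iff_le_add', mul_comm L]
  exact le_sqrt_mul_sqrt_of_forall_le (by positivity) (variance_nonneg _ _) fun s hs => by
    linarith [hquot s hs]

/-- from the asymptotic log-Harnack inequality
`P_t log f(η) ≤ log P_t f(ξ) + Λ(η)‖ξ-η‖² + Γ_t(η)‖∇log f‖_∞‖ξ-η‖`, with
`Λ(η) = c e^{δ‖η‖^{2α}}` and `Γ_t(η) = c e^{-τ₀ t} e^{δ‖η‖^{2α}}`, one deduces the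
asymptotic gradient estimate
`|∇P_t g|(ξ) ≤ √(2Λ(ξ)) √(P_t g² - (P_t g)²)(ξ) + ‖∇g‖_∞ Γ_t(ξ)`. -/
theorem asymptotic_gradient_estimate {E : Type*} [MetricSpace E] [MeasurableSpace E]
    (κ : ℝ → E → Measure E) (hκ : ∀ t x, IsProbabilityMeasure (κ t x))
    (nrm : E → ℝ) (c δ τ0 α : ℝ) (hc : 0 < c) (hδ : 0 < δ) (hτ0 : 0 < τ0)
    (hα : α ∈ Set.Icc (0:ℝ) 1)
    (H : ∀ t : ℝ, 0 ≤ t → ∀ f : E → ℝ, Measurable f → (∀ x, 0 < f x) →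
      (∃ C, ∀ x, f x ≤ C) → ∀ L : ℝ,
      (∀ x y, |Real.log (f x) - Real.log (f y)| ≤ L * dist x y) →
      ∀ ξ η : E,
        (∫ z, Real.log (f z) ∂(κ t η)) ≤ Real.log (∫ z, f z ∂(κ t ξ))
          + (c * Real.exp (δ * nrm η ^ (2 * α))) * dist ξ η ^ 2
          + (c * Real.exp (-τ0 * t) * Real.exp (δ * nrm η ^ (2 * α))) * L * dist ξ η) :
    ∀ t : ℝ, 0 ≤ t → ∀ g : E → ℝ, Measurable g → (∃ C, ∀ x, |g x| ≤ C) →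
      ∀ L : ℝ, 0 ≤ L → (∀ x y, |g x - g y| ≤ L * dist x y) → ∀ ξ : E,
      Filter.limsup
          (fun η => |(∫ z, g z ∂(κ t ξ)) - ∫ z, g z ∂(κ t η)| / dist ξ η) (𝓝[≠] ξ)
        ≤ Real.sqrt (2 * (c * Real.exp (δ * nrm ξ ^ (2 * α))))
            * Real.sqrt ((∫ z, (g z) ^ 2 ∂(κ t ξ)) - (∫ z, g z ∂(κ t ξ)) ^ 2)
          + L * (c * Real.exp (-τ0 * t) * Real.exp (δ * nrm ξ ^ (2 * α))) :=
  asymptotic_gradient_estimate_general κ hκ nrm c δ τ0 α hc H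
end

section
/- Let ρ be a metric-like function and suppose a family of maps P_t on bounded functions satisfies both P_t log f(ν) ≤ log P_t f(μ) + C₁(t)ρ(μ,ν)² + C₂ e^{−τ₀t}‖∇log f‖_∞ ρ(μ,ν) for all positive bounded f with ‖∇log f‖_∞ < ∞. Then for bounded Lipschitz f (with ‖f‖_∞, ‖∇f‖_∞ < ∞), one has |P_t f(μ) − P_t f(ν)| ≤ ρ(μ,ν)[C₂ e^{−τ₀t}‖∇f‖_∞ + 2√(C₁(t))‖f‖_∞]. -/
open Real Topology Filter

set_option maxHeartbeats 1600000 in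
/-- from the asymptotic log-Harnack inequality
`P_t log f(ν) ≤ log P_t f(μ) + C₁(t) ρ(μ,ν)² + C₂ e^{-τ₀ t} ‖∇log f‖_∞ ρ(μ,ν)`
for a Markov-type (linear, positive, unital) operator family `P_t`, one deduces for
bounded Lipschitz `f` the estimate
`|P_t f(μ) - P_t f(ν)| ≤ ρ(μ,ν) [C₂ e^{-τ₀ t} ‖∇f‖_∞ + 2√(C₁(t)) ‖f‖_∞]`. -/
theorem logHarnack_to_lipschitz {E I : Type*} [MetricSpace E]
    (Pt : ℝ → (E → ℝ) → I → ℝ)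
    (hlin : ∀ (t : ℝ) (a : ℝ) (f g : E → ℝ) (μ : I),
      Pt t (fun x => a * f x + g x) μ = a * Pt t f μ + Pt t g μ)
    (hpos : ∀ (t : ℝ) (f : E → ℝ) (μ : I), (∀ x, 0 ≤ f x) → 0 ≤ Pt t f μ)
    (hunit : ∀ (t : ℝ) (μ : I), Pt t (fun _ => 1) μ = 1)
    (ρ : I → I → ℝ) (hρ : ∀ μ ν, 0 ≤ ρ μ ν)
    (C₁ : ℝ → ℝ) (hC₁ : ∀ t, 0 < C₁ t) (C₂ τ₀ : ℝ) (hC₂ : 0 < C₂) (hτ₀ : 0 < τ₀)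
    (H : ∀ t : ℝ, 0 ≤ t → ∀ f : E → ℝ, (∀ x, 0 < f x) → (∃ C, ∀ x, f x ≤ C) →
      ∀ L : ℝ, (∀ x y, |Real.log (f x) - Real.log (f y)| ≤ L * dist x y) →
      ∀ μ ν : I,
        Pt t (fun x => Real.log (f x)) ν ≤ Real.log (Pt t f μ)
          + C₁ t * ρ μ ν ^ 2 + C₂ * Real.exp (-τ₀ * t) * L * ρ μ ν) :
    ∀ t : ℝ, 0 ≤ t → ∀ f : E → ℝ, ∀ Mf Lf : ℝ, 0 ≤ Mf → 0 ≤ Lf →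
      (∀ x, |f x| ≤ Mf) → (∀ x y, |f x - f y| ≤ Lf * dist x y) →
      ∀ μ ν : I,
        |Pt t f μ - Pt t f ν| ≤
          ρ μ ν * (C₂ * Real.exp (-τ₀ * t) * Lf + 2 * Real.sqrt (C₁ t) * Mf) := by
  -- quadratic upper bound for `exp` on `[-1,1]`
  have expQuad : ∀ u : ℝ, |u| ≤ 1 → Real.exp u ≤ 1 + u + (3/4) * u ^ 2 := by
    intro u hu
    have h := Real.exp_bound hu (n := 2) (by norm_num)
    have hsum : (∑ m ∈ Finset.range 2, u ^ m / m.factorial) = 1 + u := by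
      simp [Finset.sum_range_succ]
    rw [hsum] at h
    have h2 := (abs_sub_le_iff.1 h).1
    have h3 : |u| ^ 2 = u ^ 2 := sq_abs u
    have h4 : ((Nat.succ 2 : ℕ) : ℝ) / ((Nat.factorial 2 : ℕ) * (2:ℕ)) = 3/4 := by
      norm_num [Nat.factorial]
    rw [h4, h3] at h2
    linarith
  -- operator facts
  have Pzero : ∀ (t : ℝ) (μ : I), Pt t (fun _ => (0:ℝ)) μ = 0 := by
    intro t μ
    have h := hlin t 1 (fun _ => (0:ℝ)) (fun _ => (0:ℝ)) μ
    simp only [one_mul, add_zero] at h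
    linarith
  have Pconst : ∀ (t : ℝ) (c : ℝ) (μ : I), Pt t (fun _ => c) μ = c := by
    intro t c μ
    have h := hlin t c (fun _ => (1:ℝ)) (fun _ => (0:ℝ)) μ
    simp only [mul_one, add_zero] at h
    rw [hunit t μ, Pzero t μ] at h
    simpa using h
  have Pmono : ∀ (t : ℝ) (φ ψ : E → ℝ) (μ : I), (∀ x, φ x ≤ ψ x) → Pt t φ μ ≤ Pt t ψ μ := by
    intro t φ ψ μ hle
    have h := hlin t (-1) φ ψ μ
    have hp := hpos t (fun x => (-1) * φ x + ψ x) μ (fun x => by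
      show (0:ℝ) ≤ (-1) * φ x + ψ x
      linarith [hle x])
    rw [h] at hp
    linarith
  have Paffine : ∀ (t : ℝ) (a c : ℝ) (g : E → ℝ) (μ : I),
      Pt t (fun x => a * g x + c) μ = a * Pt t g μ + c := by
    intro t a c g μ
    have h := hlin t a g (fun _ => c) μ
    rw [Pconst t c μ] at h
    exact h
  have Pbdd : ∀ (t : ℝ) (g : E → ℝ) (M : ℝ) (μ : I), (∀ x, |g x| ≤ M) →
      |Pt t g μ| ≤ M := by
    intro t g M μ hb
    rw [abs_le]
    constructor
    · have h := Pmono t (fun _ => -M) g μ (fun x => (abs_le.1 (hb x)).1)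
      rwa [Pconst t (-M) μ] at h
    · have h := Pmono t g (fun _ => M) μ (fun x => (abs_le.1 (hb x)).2)
      rwa [Pconst t M μ] at h
  intro t ht f Mf Lf hMf hLf hfb hfl μ ν
  set s := Real.sqrt (C₁ t) with hsdef
  have hs : 0 < s := Real.sqrt_pos.2 (hC₁ t)
  have hs2 : s ^ 2 = C₁ t := Real.sq_sqrt (hC₁ t).le
  have hR : 0 ≤ ρ μ ν := hρ μ ν
  have hE : 0 < Real.exp (-τ₀ * t) := Real.exp_pos _
  -- the key consequence of the log-Harnack inequality
  have key : ∀ g : E → ℝ, (∀ x, |g x| ≤ Mf) → (∀ x y, |g x - g y| ≤ Lf * dist x y) →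
      ∀ lam : ℝ, 0 < lam → lam * Mf ≤ 1 →
      lam * Pt t g ν ≤ lam * Pt t g μ + (3/4) * lam^2 * Mf^2
        + C₁ t * ρ μ ν ^ 2 + C₂ * Real.exp (-τ₀ * t) * (lam * Lf) * ρ μ ν := by
    intro g hgb hgl lam hlam hlamM
    have hHg := H t ht (fun x => Real.exp (lam * g x)) (fun x => Real.exp_pos _)
      ⟨Real.exp (lam * Mf), fun x => Real.exp_le_exp.2
        (mul_le_mul_of_nonneg_left (le_of_abs_le (hgb x)) hlam.le)⟩
      (lam * Lf)
      (fun x y => by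
        rw [Real.log_exp, Real.log_exp]
        calc |lam * g x - lam * g y| = lam * |g x - g y| := by
              rw [← mul_sub, abs_mul, abs_of_nonneg hlam.le]
          _ ≤ lam * (Lf * dist x y) := mul_le_mul_of_nonneg_left (hgl x y) hlam.le
          _ = lam * Lf * dist x y := by ring)
      μ ν
    have hL : Pt t (fun x => Real.log (Real.exp (lam * g x))) ν = lam * Pt t g ν := by
      have he : (fun x => Real.log (Real.exp (lam * g x))) = fun x => lam * g x + 0 := by
        funext x; rw [Real.log_exp]; ring
      rw [he, Paffine t lam 0 g ν]; ring
    have hyb : Pt t (fun x => Real.exp (lam * g x)) μ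
        ≤ lam * Pt t g μ + (1 + (3/4) * lam^2 * Mf^2) := by
      have hptw : ∀ x, Real.exp (lam * g x) ≤ lam * g x + (1 + (3/4) * lam^2 * Mf^2) := by
        intro x
        have hu : |lam * g x| ≤ 1 := by
          rw [abs_mul, abs_of_nonneg hlam.le]
          calc lam * |g x| ≤ lam * Mf := mul_le_mul_of_nonneg_left (hgb x) hlam.le
            _ ≤ 1 := hlamM
        have h1 := expQuad _ hu
        have hg2 : (g x) ^ 2 ≤ Mf ^ 2 := by
          rw [← sq_abs]
          exact pow_le_pow_left₀ (abs_nonneg _) (hgb x) 2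
        nlinarith [sq_nonneg lam]
      have h := Pmono t (fun x => Real.exp (lam * g x))
        (fun x => lam * g x + (1 + (3/4) * lam^2 * Mf^2)) μ hptw
      rwa [Paffine t lam (1 + (3/4) * lam^2 * Mf^2) g μ] at h
    have hypos : 0 < Pt t (fun x => Real.exp (lam * g x)) μ := by
      have h := Pmono t (fun _ => Real.exp (-(lam * Mf))) (fun x => Real.exp (lam * g x)) μ
        (fun x => by
          apply Real.exp_le_exp.2
          have := (abs_le.1 (hgb x)).1
          nlinarith)
      rw [Pconst t (Real.exp (-(lam * Mf))) μ] at h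
      exact lt_of_lt_of_le (Real.exp_pos _) h
    have hlog : Real.log (Pt t (fun x => Real.exp (lam * g x)) μ)
        ≤ lam * Pt t g μ + (3/4) * lam^2 * Mf^2 := by
      have h1 := Real.log_le_log hypos hyb
      have hpos2 : (0:ℝ) < lam * Pt t g μ + (1 + (3/4) * lam^2 * Mf^2) :=
        lt_of_lt_of_le hypos hyb
      have h2 := Real.log_le_sub_one_of_pos hpos2
      linarith
    rw [hL] at hHg
    linarith
  -- two-sided estimate
  have habs : ∀ lam : ℝ, 0 < lam → lam * Mf ≤ 1 →
      lam * |Pt t f μ - Pt t f ν| ≤ (3/4) * lam^2 * Mf^2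
        + C₁ t * ρ μ ν ^ 2 + C₂ * Real.exp (-τ₀ * t) * (lam * Lf) * ρ μ ν := by
    intro lam hl hlM
    have h1 := key f hfb hfl lam hl hlM
    have h2 := key (fun x => (-1) * f x + 0)
      (fun x => by simpa using hfb x)
      (fun x y => by
        have := hfl y x
        calc |((-1) * f x + 0) - ((-1) * f y + 0)| = |f y - f x| := by
              rw [show ((-1) * f x + 0) - ((-1) * f y + 0) = f y - f x by ring]
          _ ≤ Lf * dist y x := this
          _ = Lf * dist x y := by rw [dist_comm])
      lam hl hlM
    rw [Paffine t (-1) 0 f ν, Paffine t (-1) 0 f μ] at h2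
    have hcases := abs_cases (Pt t f μ - Pt t f ν)
    rcases hcases with ⟨heq, _⟩ | ⟨heq, _⟩ <;> rw [heq] <;> nlinarith
  -- now conclude
  rcases le_or_gt 1 (s * ρ μ ν) with hbig | hsmall
  · -- trivial bound
    have hb1 := abs_le.1 (Pbdd t f Mf μ hfb)
    have hb2 := abs_le.1 (Pbdd t f Mf ν hfb)
    have h2M : |Pt t f μ - Pt t f ν| ≤ 2 * Mf := by
      rw [abs_le]; constructor <;> linarith
    have hLfterm : 0 ≤ ρ μ ν * (C₂ * Real.exp (-τ₀ * t) * Lf) :=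
      mul_nonneg hR (mul_nonneg (mul_nonneg hC₂.le hE.le) hLf)
    nlinarith [mul_nonneg (by linarith : (0:ℝ) ≤ s * ρ μ ν - 1) hMf]
  · rcases eq_or_lt_of_le hMf with hMf0 | hMf0
    · -- Mf = 0
      have hb1 := abs_le.1 (Pbdd t f Mf μ hfb)
      have hb2 := abs_le.1 (Pbdd t f Mf ν hfb)
      have h2M : |Pt t f μ - Pt t f ν| ≤ 2 * Mf := by
        rw [abs_le]; constructor <;> linarith
      have hLfterm : 0 ≤ ρ μ ν * (C₂ * Real.exp (-τ₀ * t) * Lf) :=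
        mul_nonneg hR (mul_nonneg (mul_nonneg hC₂.le hE.le) hLf)
      nlinarith [mul_nonneg (mul_nonneg hs.le hR) hMf]
    · rcases eq_or_lt_of_le hR with hR0 | hR0
      · -- ρ μ ν = 0 : limit argument
        have hgoal : |Pt t f μ - Pt t f ν| ≤ 0 := by
          by_contra hc
          push_neg at hc
          set D := |Pt t f μ - Pt t f ν| with hD
          set lam := min (1 / Mf) (D / (2 * Mf ^ 2)) with hlamdef
          have hl : 0 < lam := lt_min (by positivity) (by positivity)
          have hlM : lam * Mf ≤ 1 := by
            have h1 : lam ≤ 1 / Mf := min_le_left _ _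
            calc lam * Mf ≤ (1 / Mf) * Mf := mul_le_mul_of_nonneg_right h1 hMf0.le
              _ = 1 := by field_simp
          have h := habs lam hl hlM
          rw [← hR0] at h
          simp only [ne_eq, OfNat.ofNat_ne_zero, not_false_eq_true, zero_pow, mul_zero,
            add_zero] at h
          -- h : lam * D ≤ 3/4 * lam^2 * Mf^2
          have h2 : lam ≤ D / (2 * Mf ^ 2) := min_le_right _ _
          have h3 : lam * Mf ^ 2 ≤ D / 2 := by
            calc lam * Mf ^ 2 ≤ (D / (2 * Mf ^ 2)) * Mf ^ 2 :=
                  mul_le_mul_of_nonneg_right h2 (by positivity)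
              _ = D / 2 := by field_simp
          nlinarith
        have : 0 ≤ ρ μ ν * (C₂ * Real.exp (-τ₀ * t) * Lf + 2 * s * Mf) := by
          apply mul_nonneg hR
          have : 0 ≤ C₂ * Real.exp (-τ₀ * t) * Lf :=
            mul_nonneg (mul_nonneg hC₂.le hE.le) hLf
          nlinarith [mul_nonneg (mul_nonneg (by norm_num : (0:ℝ) ≤ 2) hs.le) hMf]
        linarith [abs_nonneg (Pt t f μ - Pt t f ν)]
      · -- main case : 0 < Mf, 0 < ρ μ ν, s * ρ μ ν < 1
        obtain ⟨lam, hlamdef⟩ : ∃ lam : ℝ, lam = s * ρ μ ν / Mf := ⟨_, rfl⟩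
        have hl : 0 < lam := by rw [hlamdef]; exact div_pos (mul_pos hs hR0) hMf0
        have e1 : lam * Mf = s * ρ μ ν := by
          rw [hlamdef, div_mul_cancel₀ _ hMf0.ne']
        have hlM : lam * Mf ≤ 1 := by rw [e1]; exact hsmall.le
        have h := habs lam hl hlM
        have e1sq : lam ^ 2 * Mf ^ 2 = s ^ 2 * ρ μ ν ^ 2 := by
          have h' : (lam * Mf) ^ 2 = (s * ρ μ ν) ^ 2 := by rw [e1]
          nlinarith [h']
        have e1sr : lam * Mf * (s * ρ μ ν) = s ^ 2 * ρ μ ν ^ 2 := by rw [e1]; ring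
        have hgoal2 : (3/4) * lam^2 * Mf^2 + C₁ t * ρ μ ν ^ 2
            + C₂ * Real.exp (-τ₀ * t) * (lam * Lf) * ρ μ ν
            ≤ lam * (ρ μ ν * (C₂ * Real.exp (-τ₀ * t) * Lf + 2 * s * Mf)) := by
          have hC : C₁ t * ρ μ ν ^ 2 = s ^ 2 * ρ μ ν ^ 2 := by rw [hs2]
          have hsR : 0 ≤ s ^ 2 * ρ μ ν ^ 2 := by positivity
          nlinarith [e1sq, e1sr, hC, hsR]
        have hfinal : lam * |Pt t f μ - Pt t f ν|
            ≤ lam * (ρ μ ν * (C₂ * Real.exp (-τ₀ * t) * Lf + 2 * s * Mf)) := le_trans h hgoal2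
        exact le_of_mul_le_mul_left hfinal hl
end
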